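/- There is an absolute constant b > 0 such that for all sufficiently large t and every real K with 1 ≤ K ≤ log log t, setting σ₀ = 1 + K/((log t)^{2/3}(log log t)^{1/3}), one has −Re(ζ'(σ₀+it)/ζ(σ₀+it)) ≤ b·(log log t)^{1/3}(log t)^{2/3}. -/

import Mathlib

/-!
For `Re s = σ > 1` the Dirichlet series `-ζ'/ζ(s) = ∑ Λ(n) n^{-s}` has nonnegative coefficients, so
`-Re(ζ'/ζ(σ + it)) ≤ ∑ Λ(n) n^{-σ} = -ζ'/ζ(σ)`. Since `ζ` has a simple pole at `1` and no zeros on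
`Re s ≥ 1`, `-ζ'/ζ(s) - 1/(s - 1)` is continuous there, hence `-ζ'/ζ(σ) ≤ C/(σ - 1)` for
`1 < σ ≤ 2`. With `σ₀ - 1 = K/X`, `X = (log t)^{2/3}(log log t)^{1/3}`, this gives the bound `C X/K ≤ C X`;
`σ₀ ≤ 2` holds because `K ≤ log log t ≤ X`.
-/

open Complex LSeries ArithmeticFunction
open scoped LSeries.notation

namespace ArithmeticFunction.vonMangoldt

variable {q : ℕ} [NeZero q] {a : ZMod q}

lemma tsum_residueClass_div_rpow_eq (ha : IsUnit a) {x : ℝ} (hx : 1 < x) :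
    ∑' n, residueClass a n / (n : ℝ) ^ x =
      (LFunctionResidueClassAux a x).re + (q.totient : ℝ)⁻¹ / (x - 1) := by
  refine ofReal_injective ?_
  simp only [ofReal_tsum, ofReal_div, ofReal_cpow (Nat.cast_nonneg _), ofReal_natCast,
    ofReal_add, ofReal_inv, ofReal_sub, ofReal_one]
  simp_rw [← LFunctionResidueClassAux_real ha hx,
    eqOn_LFunctionResidueClassAux ha <| Set.mem_ofPred.mpr (ofReal_re x ▸ hx), sub_add_cancel,
    LSeries, term]
  refine tsum_congr fun n ↦ ?_
  split_ifs with hn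
  · simp only [hn, residueClass_apply_zero, ofReal_zero, zero_div]
  · rfl

lemma LSeries_residueClass_upper_bound (ha : IsUnit a) :
    ∃ C : ℝ, ∀ {x : ℝ}, x ∈ Set.Ioc 1 2 →
      ∑' n, residueClass a n / (n : ℝ) ^ x ≤ (q.totient : ℝ)⁻¹ / (x - 1) + C := by
  have hcont : ContinuousOn (fun x : ℝ ↦ (LFunctionResidueClassAux a x).re) (Set.Icc 1 2) :=
    continuous_re.comp_continuousOn <| (continuousOn_LFunctionResidueClassAux a).comp
      continuous_ofReal.continuousOn fun x hx ↦ by simpa using hx.1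
  obtain ⟨C, hC⟩ := bddAbove_def.mp <| isCompact_Icc.bddAbove_image hcont
  refine ⟨C, fun {x} hx ↦ ?_⟩
  rw [tsum_residueClass_div_rpow_eq ha hx.1, add_comm]
  exact add_le_add_right (hC _ ⟨x, Set.mem_Icc_of_Ioc hx, rfl⟩) _

lemma residueClass_zmod_one (b : ZMod 1) : residueClass b = fun n ↦ vonMangoldt n :=
  funext fun n ↦ Set.indicator_of_mem (s := {n : ℕ | (n : ZMod 1) = b})
    (Subsingleton.elim (n : ZMod 1) b) _

lemma exists_tsum_div_rpow_le :
    ∃ C > 0, ∀ {x : ℝ}, x ∈ Set.Ioc 1 2 → ∑' n, vonMangoldt n / (n : ℝ) ^ x ≤ C / (x - 1) := by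
  obtain ⟨C, hC⟩ := LSeries_residueClass_upper_bound (isUnit_of_subsingleton (0 : ZMod 1))
  refine ⟨1 + max C 0, by positivity, fun {x} hx ↦ ?_⟩
  have hx1 : 0 < x - 1 := sub_pos.mpr hx.1
  have hC' : C ≤ max C 0 / (x - 1) :=
    (le_max_left C 0).trans <| le_div_self (le_max_right C 0) hx1 (by linarith [hx.2])
  calc ∑' n, vonMangoldt n / (n : ℝ) ^ x ≤ 1 / (x - 1) + C := by
        simpa [residueClass_zmod_one] using hC hx
    _ ≤ (1 + max C 0) / (x - 1) := by rw [add_div]; gcongr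

end ArithmeticFunction.vonMangoldt

lemma neg_re_logDeriv_riemannZeta_le_tsum {s : ℂ} (hs : 1 < s.re) :
    -(deriv riemannZeta s / riemannZeta s).re ≤ ∑' n, Λ n / (n : ℝ) ^ s.re := by
  rw [← neg_re, ← neg_div, ← LSeries_vonMangoldt_eq_deriv_riemannZeta_div hs]
  have hsum : Summable fun n ↦ ‖term (fun n ↦ (Λ n : ℂ)) s n‖ :=
    summable_norm_iff.mpr (LSeriesSummable_vonMangoldt hs)
  calc (L ↗Λ s).re ≤ ‖L ↗Λ s‖ := re_le_norm _
    _ ≤ ∑' n, ‖term (fun n ↦ (Λ n : ℂ)) s n‖ := norm_tsum_le_tsum_norm hsum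
    _ = ∑' n, Λ n / (n : ℝ) ^ s.re := by
      refine tsum_congr fun n ↦ ?_
      rw [norm_term_eq]
      split_ifs with hn
      · simp [hn]
      · rw [norm_real, Real.norm_of_nonneg vonMangoldt_nonneg]

lemma Real.le_rpow_mul_rpow_of_le {x y a b : ℝ} (hy : 0 ≤ y) (hyx : y ≤ x) (ha : 0 ≤ a)
    (hab : a + b = 1) : y ≤ x ^ a * y ^ b := by
  calc y = y ^ a * y ^ b := by rw [← Real.rpow_add' hy (by rw [hab]; norm_num), hab, Real.rpow_one]
    _ ≤ x ^ a * y ^ b := by gcongr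

lemma exists_neg_re_logDeriv_riemannZeta_le :
    ∃ C > 0, ∀ {σ : ℝ}, σ ∈ Set.Ioc 1 2 → ∀ t : ℝ,
      -(deriv riemannZeta (σ + t * I) / riemannZeta (σ + t * I)).re ≤ C / (σ - 1) := by
  obtain ⟨C, hC, hbound⟩ := vonMangoldt.exists_tsum_div_rpow_le
  refine ⟨C, hC, fun {σ} hσ t ↦ ?_⟩
  have hre : (σ + t * I).re = σ := by simp
  have h := neg_re_logDeriv_riemannZeta_le_tsum (s := σ + t * I) (by rw [hre]; exact hσ.1)
  rw [hre] at h
  exact h.trans (hbound hσ)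

/-- There is an absolute constant `b > 0` such that for all sufficiently large `t` and every
real `1 ≤ K ≤ log log t`, with `σ₀ = 1 + K/((log t)^{2/3}(log log t)^{1/3})` one has
`−Re(ζ'(σ₀+it)/ζ(σ₀+it)) ≤ b (log log t)^{1/3} (log t)^{2/3}`. -/
theorem neg_re_logDeriv_zeta_bound :
    ∃ b > (0 : ℝ), ∃ t₀ : ℝ, ∀ t ≥ t₀, ∀ K : ℝ, 1 ≤ K → K ≤ Real.log (Real.log t) →
      ∀ σ₀ : ℝ,
        σ₀ = 1 + K / ((Real.log t) ^ ((2 : ℝ)/3) * (Real.log (Real.log t)) ^ ((1 : ℝ)/3)) →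
        -((deriv riemannZeta (σ₀ + t * Complex.I) / riemannZeta (σ₀ + t * Complex.I)).re)
          ≤ b * (Real.log (Real.log t)) ^ ((1 : ℝ)/3) * (Real.log t) ^ ((2 : ℝ)/3) := by
  obtain ⟨C, hC, hbound⟩ := exists_neg_re_logDeriv_riemannZeta_le
  refine ⟨C, hC, 1, fun t ht K hK1 hK2 σ₀ hσ₀ ↦ ?_⟩
  set X := (Real.log t) ^ ((2 : ℝ)/3) * (Real.log (Real.log t)) ^ ((1 : ℝ)/3)
  have hK : K ≤ X := hK2.trans <| Real.le_rpow_mul_rpow_of_le (by linarith)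
    (Real.log_le_self (Real.log_nonneg ht)) (by norm_num) (by norm_num)
  have hX : 0 < X := by linarith
  have hσ₀_mem : σ₀ ∈ Set.Ioc 1 2 := by
    constructor <;> rw [hσ₀]
    · linarith [div_pos (by linarith : (0 : ℝ) < K) hX]
    · linarith [(div_le_one hX).mpr hK]
  calc -((deriv riemannZeta (σ₀ + t * I) / riemannZeta (σ₀ + t * I)).re)
      ≤ C / (σ₀ - 1) := hbound hσ₀_mem t
    _ = C * X / K := by rw [hσ₀, add_sub_cancel_left, div_div_eq_mul_div]
    _ ≤ C * X := div_le_self (by positivity) hK1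
    _ = C * (Real.log (Real.log t)) ^ ((1 : ℝ)/3) * (Real.log t) ^ ((2 : ℝ)/3) := by ring
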